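/- Let Λ = Λ(l; p_1, …, p_m), let S = S(∞^{n−d−m}, p_1−1, …, p_m−1), let L = (τ_1, …, τ_t) be a shelling of skel_d(Λ), and let σ be a bijection from the set of facets of skel_d(Λ) to S^d (the monomials of S of total degree at most d) such that: deg(σ(τ_i)) = |T_L(τ_i)| for all i, and whenever γ ∈ T_L(τ_i) there exist j < i and a divisor μ of σ(τ_i) with γ ⊆ τ_j, deg(μ) = deg(σ(τ_j)), and σ(τ_j) ≤ μ in reverse lexicographic order. Let M ⊆ S^d be a multicomplex that is reverse-lex compressed, i.e., whenever deg(μ) = deg(μ'), μ < μ' in reverse lex order, and μ' ∈ M, then μ ∈ M. Let L^M be the restriction of L to σ^{−1}(M). Then T_{L^M}(τ) = T_L(τ) for each τ ∈ σ^{−1}(M), so L^M is a shelling of the subcomplex ∪_{τ ∈ σ^{−1}(M)} τ̄ of skel_d(Λ), and the h-vector of this subcomplex equals the F-vector of M. -/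

import Mathlib

open Finset

/-- An (abstract) simplicial complex: a family of finite subsets closed under taking subsets. -/
def IsComplex {V : Type*} (K : Set (Finset V)) : Prop :=
  ∀ s ∈ K, ∀ t, t ⊆ s → t ∈ K

/-- Number of faces of cardinality `i` (that is, `f_{i-1}`). -/
noncomputable def faceCount {V : Type*} (K : Set (Finset V)) (i : ℕ) : ℕ :=
  {s | s ∈ K ∧ s.card = i}.ncard

/-- `h` is the h-vector of the `(d-1)`-dimensional complex `K`:
`Σ_{i=0}^d h_i x^i = Σ_{i=0}^d f_{i-1} x^i (1-x)^{d-i}`. -/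
def IsHVector {V : Type*} (K : Set (Finset V)) (d : ℕ) (h : ℕ → ℤ) : Prop :=
  ∑ i ∈ Finset.range (d + 1), Polynomial.C (h i) * Polynomial.X ^ i =
    ∑ i ∈ Finset.range (d + 1),
      Polynomial.C ((faceCount K i : ℤ)) * Polynomial.X ^ i * (1 - Polynomial.X) ^ (d - i)

/-- `K` is pure of dimension `d - 1`: nonempty in top dimension, and every face is
contained in a face of cardinality `d`. -/
def IsPureDim {V : Type*} (K : Set (Finset V)) (d : ℕ) : Prop :=
  (∃ s ∈ K, s.card = d) ∧ ∀ s ∈ K, ∃ t ∈ K, s ⊆ t ∧ t.card = d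

/-- The facets listed before `τ` in the ordering `L`. -/
def prevFacets {V : Type*} [DecidableEq V] (L : List (Finset V)) (τ : Finset V) :
    List (Finset V) :=
  L.takeWhile (fun τ' => τ' != τ)

/-- `γ` lies in `∪_{j<i} τ̄_j`, the union of the closures of the facets listed before `τ`. -/
def coveredBefore {V : Type*} [DecidableEq V] (L : List (Finset V)) (τ γ : Finset V) : Prop :=
  ∃ τ' ∈ prevFacets L τ, γ ⊆ τ'

/-- `T_L(τ)`: the set of facets of `τ̄ ∩ (∪_{j<i} τ̄_j)`. -/
def TL {V : Type*} [DecidableEq V] (L : List (Finset V)) (τ : Finset V) : Set (Finset V) :=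
  {γ | γ ⊆ τ ∧ coveredBefore L τ γ ∧
    ∀ γ', γ ⊆ γ' → γ' ⊆ τ → coveredBefore L τ γ' → γ' = γ}

/-- `L` is a shelling of the pure `(d-1)`-dimensional complex `K`: it lists the facets
(faces of cardinality `d`) without repetition, every face of `K` lies under some facet,
and for every non-initial facet `τ` the complex `τ̄ ∩ (∪_{j<i} τ̄_j)` is pure of
dimension `d - 2`. -/
def IsShelling {V : Type*} [DecidableEq V] (K : Set (Finset V)) (d : ℕ)
    (L : List (Finset V)) : Prop :=
  L.Nodup ∧
  (∀ τ, τ ∈ L ↔ τ ∈ K ∧ τ.card = d) ∧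
  (∀ s ∈ K, ∃ t ∈ L, s ⊆ t) ∧
  (∀ τ ∈ L, prevFacets L τ ≠ [] →
    IsPureDim {γ | γ ⊆ τ ∧ coveredBefore L τ γ} (d - 1))

/-- Monomials in `k` variables `x_0 < x_1 < … < x_{k-1}`, recorded by exponent vectors. -/
abbrev Mono (k : ℕ) := Fin k → ℕ

/-- Total degree of a monomial. -/
def mDeg {k : ℕ} (μ : Mono k) : ℕ := ∑ i, μ i

/-- Divisibility of monomials. -/
def mDvd {k : ℕ} (ν μ : Mono k) : Prop := ∀ i, ν i ≤ μ i

/-- `S(a_1, …, a_k)`: monomials whose exponent of `x_i` is at most `a_i ∈ ℕ ∪ {∞}`. -/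
def SBound {k : ℕ} (b : Fin k → ℕ∞) : Set (Mono k) :=
  {μ | ∀ i, (μ i : ℕ∞) ≤ b i}

/-- A multicomplex in `S(b)`: a nonempty set of monomials of `S(b)` closed under divisibility. -/
def IsMulticomplex {k : ℕ} (b : Fin k → ℕ∞) (M : Set (Mono k)) : Prop :=
  M.Nonempty ∧ M ⊆ SBound b ∧ ∀ μ ∈ M, ∀ ν, mDvd ν μ → ν ∈ M

/-- `F_i(M)`: the number of monomials of `M` of total degree `i`. -/
noncomputable def FVec {k : ℕ} (M : Set (Mono k)) (i : ℕ) : ℕ :=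
  {μ ∈ M | mDeg μ = i}.ncard

/-- Reverse lexicographic order (within a fixed total degree): `μ < ν` if for some `i`
the exponent of `x_i` in `μ` is smaller and the exponents agree beyond `i`. -/
def mRlexLt {k : ℕ} (μ ν : Mono k) : Prop :=
  ∃ i, μ i < ν i ∧ ∀ j, i < j → μ j = ν j

/-- The bound vector `(∞^{n-d-m}, p_1 - 1, …, p_m - 1)` on `n - d` variables. -/
def lamBounds (n d m : ℕ) (p : Fin m → ℕ) : Fin (n - d) → ℕ∞ :=
  fun j =>
    if (j : ℕ) < n - d - m then ⊤
    else if h2 : (j : ℕ) - (n - d - m) < m then (((p ⟨(j : ℕ) - (n - d - m), h2⟩ - 1 : ℕ)) : ℕ∞)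
    else 0

/-- The vertex set of `Λ(l; p_1, …, p_m)`: a set `V'` of size `l` together with
disjoint sets `P_i` of sizes `p_i`. -/
abbrev LamVert (l : ℕ) {m : ℕ} (p : Fin m → ℕ) := Fin l ⊕ Σ i : Fin m, Fin (p i)

/-- The vertex block `P_i`. -/
def Pblock (l : ℕ) {m : ℕ} (p : Fin m → ℕ) (i : Fin m) : Finset (LamVert l p) :=
  Finset.univ.image (fun j : Fin (p i) => (Sum.inr ⟨i, j⟩ : LamVert l p))

/-- The faces of `Λ(l; p_1, …, p_m)`: subsets of the vertex set containing no `P_i` entirely. -/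
def LambdaFaces (l : ℕ) {m : ℕ} (p : Fin m → ℕ) : Set (Finset (LamVert l p)) :=
  {F | ∀ i : Fin m, ¬ Pblock l p i ⊆ F}

/-- `full(τ) = {i : |P_i ∩ τ| = |P_i| - 1}`. -/
def fullSet {l m : ℕ} {p : Fin m → ℕ} (τ : Finset (LamVert l p)) : Finset (Fin m) :=
  Finset.univ.filter (fun i => (Pblock l p i ∩ τ).card = p i - 1)

/-- The elements of `P_i` missing from `τ`; a singleton `{miss(τ, i)}` when `i ∈ full(τ)`. -/
def missSet {l m : ℕ} {p : Fin m → ℕ} (τ : Finset (LamVert l p)) (i : Fin m) :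
    Finset (LamVert l p) :=
  Pblock l p i \ τ

/-- Candidates for `s_O(τ)`: vertices not in `τ` and different from each `miss(τ, i)`,
`i ∈ full(τ)`. -/
def sCand {l m : ℕ} {p : Fin m → ℕ} (τ : Finset (LamVert l p)) : Finset (LamVert l p) :=
  Finset.univ.filter (fun v => v ∉ τ ∧ ∀ i ∈ fullSet τ, v ∉ missSet τ i)

/-- The position (with respect to the ordering `e`) of `s_O(τ)`, or `∞` if it does not exist. -/
noncomputable def sPos {l m n : ℕ} {p : Fin m → ℕ} (e : LamVert l p ≃ Fin n)
    (τ : Finset (LamVert l p)) : WithTop (Fin n) :=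
  ((sCand τ).image e).min

/-- `τ_{> s_O(τ)}`. -/
noncomputable def tauAbove {l m n : ℕ} {p : Fin m → ℕ} (e : LamVert l p ≃ Fin n)
    (τ : Finset (LamVert l p)) : Finset (LamVert l p) :=
  τ.filter (fun y => sPos e τ < ((e y : Fin n) : WithTop (Fin n)))

/-- `U_O(τ) = { y ∈ P_i : y > miss(τ, i) for some i ∈ full(τ) }`. -/
def USet {l m n : ℕ} {p : Fin m → ℕ} (e : LamVert l p ≃ Fin n)
    (τ : Finset (LamVert l p)) : Finset (LamVert l p) :=
  Finset.univ.filter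
    (fun y => ∃ i ∈ fullSet τ, y ∈ Pblock l p i ∧ ∃ w ∈ missSet τ i, e w < e y)

/-- `R_O(τ) = τ_{> s_O(τ)} ∪ U_O(τ)`. -/
noncomputable def RSet {l m n : ℕ} {p : Fin m → ℕ} (e : LamVert l p ≃ Fin n)
    (τ : Finset (LamVert l p)) : Finset (LamVert l p) :=
  tauAbove e τ ∪ USet e τ

/-- Reverse lexicographic comparison of two finite vertex sets with respect to the
ordering `e`: `τ < τ'` if the largest vertex in which they differ belongs to `τ'`. -/
def rlexLt {l m n : ℕ} {p : Fin m → ℕ} (e : LamVert l p ≃ Fin n)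
    (τ τ' : Finset (LamVert l p)) : Prop :=
  ∃ v, v ∈ τ' ∧ v ∉ τ ∧ ∀ w, e v < e w → (w ∈ τ ↔ w ∈ τ')

/-- The `d`-skeleton of `Λ`: faces of cardinality at most `d`. -/
def skel (l : ℕ) {m : ℕ} (p : Fin m → ℕ) (d : ℕ) : Set (Finset (LamVert l p)) :=
  {F | F ∈ LambdaFaces l p ∧ F.card ≤ d}

/-- The facets of the `d`-skeleton of `Λ`: faces of cardinality exactly `d`. -/
def skelFacets (l : ℕ) {m : ℕ} (p : Fin m → ℕ) (d : ℕ) : Set (Finset (LamVert l p)) :=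
  {F | F ∈ LambdaFaces l p ∧ F.card = d}

/-- `S^d`: the monomials of `S(b)` of total degree at most `d`. -/
def SBoundDeg {k : ℕ} (b : Fin k → ℕ∞) (d : ℕ) : Set (Mono k) :=
  {μ | μ ∈ SBound b ∧ mDeg μ ≤ d}

/-!
For `τ` with `σ τ ∈ M`, every facet of `τ̄ ∩ (∪_{j<i} τ̄_j)` lies in an earlier facet `τ'` whose
monomial is rlex-below a divisor of `σ τ`; as `M` is closed under divisors and rlex-compressed,
`σ τ' ∈ M`. Hence restricting `L` to `σ⁻¹(M)` changes no `T(τ)` and yields a shelling again.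
In any shelling the faces that first appear with `τ` form the interval `[R(τ), τ]`, where
`R(τ) = {v | τ ∖ {v} is covered earlier}` has `|R(τ)| = |T(τ)|`. So the h-polynomial is
`∑_τ X ^ |T(τ)| = ∑_τ X ^ deg σ(τ)`, the F-polynomial of `M`.
-/

open Polynomial

lemma sum_range_card_filter_nsmul {α M : Type*} [AddCommMonoid M] {s : Finset α} {w : α → ℕ}
    {d : ℕ} (hw : ∀ x ∈ s, w x ≤ d) (g : ℕ → M) :
    ∑ i ∈ range (d + 1), #{x ∈ s | w x = i} • g i = ∑ x ∈ s, g (w x) := by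
  rw [← sum_fiberwise_of_maps_to fun x hx => mem_range.2 (Nat.lt_succ_of_le (hw x hx))]
  refine sum_congr rfl fun i _ => ?_
  rw [sum_congr rfl fun x hx => by rw [(mem_filter.1 hx).2], sum_const]

lemma faceCount_coe {V : Type*} (F : Finset (Finset V)) (i : ℕ) :
    faceCount (F : Set (Finset V)) i = #{γ ∈ F | γ.card = i} := by
  rw [faceCount, ← Set.ncard_coe_finset, coe_filter]
  rfl

lemma FVec_coe {k : ℕ} (N : Finset (Mono k)) (i : ℕ) :
    FVec (N : Set (Mono k)) i = #{μ ∈ N | mDeg μ = i} := by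
  rw [FVec, ← Set.ncard_coe_finset, coe_filter]
  rfl

section Shelling

variable {V : Type*} [DecidableEq V]

@[simp] lemma prevFacets_cons_self (L : List (Finset V)) (τ : Finset V) :
    prevFacets (τ :: L) τ = [] := by
  simp [prevFacets]

lemma prevFacets_cons_of_ne {a τ : Finset V} (L : List (Finset V)) (h : a ≠ τ) :
    prevFacets (a :: L) τ = a :: prevFacets L τ := by
  simp [prevFacets, h]

lemma prevFacets_sublist (L : List (Finset V)) (τ : Finset V) : (prevFacets L τ).Sublist L :=
  (List.takeWhile_prefix _).sublist

lemma self_notMem_prevFacets (L : List (Finset V)) (τ : Finset V) : τ ∉ prevFacets L τ := by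
  intro h
  simpa using List.mem_takeWhile_imp h

lemma prevFacets_append_cons {τ : Finset V} {P : List (Finset V)} (Q : List (Finset V))
    (h : τ ∉ P) : prevFacets (P ++ τ :: Q) τ = P := by
  induction P with
  | nil => simp
  | cons a P ih =>
    rw [List.mem_cons, not_or] at h
    rw [List.cons_append, prevFacets_cons_of_ne _ (Ne.symm h.1), ih h.2]

lemma mem_prevFacets_of_sublist_iff {L₀ L : List (Finset V)} (hs : L₀.Sublist L)
    (hnd : L.Nodup) {τ τ' : Finset V} (hτ : τ ∈ L₀) :
    τ' ∈ prevFacets L₀ τ ↔ τ' ∈ prevFacets L τ ∧ τ' ∈ L₀ := by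
  induction hs with
  | slnil => simp at hτ
  | @cons l₁ l₂ a hsub ih =>
    obtain ⟨ha, hnd⟩ := List.nodup_cons.1 hnd
    have haτ : a ≠ τ := fun h => ha (h ▸ hsub.subset hτ)
    rw [prevFacets_cons_of_ne _ haτ, List.mem_cons, ih hnd hτ]
    constructor
    · exact fun h => ⟨Or.inr h.1, h.2⟩
    · rintro ⟨rfl | h, h'⟩
      · exact absurd (hsub.subset h') ha
      · exact ⟨h, h'⟩
  | @cons_cons l₁ l₂ a hsub ih =>
    obtain ⟨-, hnd⟩ := List.nodup_cons.1 hnd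
    by_cases haτ : a = τ
    · subst haτ
      simp
    · have hτ : τ ∈ l₁ := (List.mem_cons.1 hτ).resolve_left (Ne.symm haτ)
      rw [prevFacets_cons_of_ne _ haτ, prevFacets_cons_of_ne _ haτ, List.mem_cons,
        List.mem_cons, ih hnd hτ, List.mem_cons]
      tauto

lemma coveredBefore_mono {L : List (Finset V)} {τ γ γ' : Finset V} (h : γ ⊆ γ')
    (hc : coveredBefore L τ γ') : coveredBefore L τ γ :=
  let ⟨τ', hτ', hγ'⟩ := hc
  ⟨τ', hτ', h.trans hγ'⟩

lemma exists_mem_TL_superset {L : List (Finset V)} {τ γ : Finset V} (hγ : γ ⊆ τ)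
    (hc : coveredBefore L τ γ) : ∃ β ∈ TL L τ, γ ⊆ β := by
  classical
  let F := τ.powerset.filter fun β => γ ⊆ β ∧ coveredBefore L τ β
  obtain ⟨β, hβF, hβmax⟩ := F.exists_max_image card ⟨γ, by simp [F, hγ, hc]⟩
  simp only [F, mem_filter, mem_powerset] at hβF hβmax
  refine ⟨β, ⟨hβF.1, hβF.2.2, fun β' hββ' hβ'τ hβ'c => ?_⟩, hβF.2.1⟩
  exact (eq_of_subset_of_card_le hββ' (hβmax β' ⟨hβ'τ, hβF.2.1.trans hββ', hβ'c⟩)).symm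

lemma TL_congr {L₁ L₂ : List (Finset V)} {τ : Finset V}
    (h : ∀ γ ⊆ τ, coveredBefore L₁ τ γ ↔ coveredBefore L₂ τ γ) : TL L₁ τ = TL L₂ τ := by
  ext γ
  refine and_congr_right fun hγ => and_congr (h γ hγ) (forall_congr' fun γ' =>
    imp_congr_right fun _ => forall_congr' fun hγ' => imp_congr_left (h γ' hγ'))

lemma coveredBefore_sublist_iff {L₀ L : List (Finset V)} (hs : L₀.Sublist L) (hnd : L.Nodup)
    {τ : Finset V} (hτ : τ ∈ L₀)
    (hTL : ∀ β ∈ TL L τ, ∃ τ' ∈ prevFacets L τ, τ' ∈ L₀ ∧ β ⊆ τ') {γ : Finset V}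
    (hγ : γ ⊆ τ) : coveredBefore L₀ τ γ ↔ coveredBefore L τ γ := by
  constructor
  · rintro ⟨τ', hτ', hγτ'⟩
    exact ⟨τ', ((mem_prevFacets_of_sublist_iff hs hnd hτ).1 hτ').1, hγτ'⟩
  · intro hc
    obtain ⟨β, hβ, hγβ⟩ := exists_mem_TL_superset hγ hc
    obtain ⟨τ', hτ', hτ'₀, hβτ'⟩ := hTL β hβ
    exact ⟨τ', (mem_prevFacets_of_sublist_iff hs hnd hτ).2 ⟨hτ', hτ'₀⟩, hγβ.trans hβτ'⟩

def facesOf (L : List (Finset V)) : Finset (Finset V) :=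
  L.toFinset.biUnion powerset

lemma mem_facesOf {L : List (Finset V)} {γ : Finset V} : γ ∈ facesOf L ↔ ∃ τ ∈ L, γ ⊆ τ := by
  simp [facesOf]

lemma facesOf_append_singleton (P : List (Finset V)) (τ : Finset V) :
    facesOf (P ++ [τ]) = facesOf P ∪ τ.powerset := by
  ext γ
  simp [mem_facesOf, or_and_right, exists_or]

lemma IsShelling.sublist {K : Set (Finset V)} {d : ℕ} {L L₀ : List (Finset V)}
    (hL : IsShelling K d L) (hs : L₀.Sublist L)
    (hcov : ∀ τ ∈ L₀, ∀ γ ⊆ τ, coveredBefore L₀ τ γ ↔ coveredBefore L τ γ) :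
    IsShelling {γ | ∃ τ ∈ L₀, γ ⊆ τ} d L₀ := by
  obtain ⟨hnd, hfac, -, hpure⟩ := hL
  have hcard : ∀ τ ∈ L₀, τ.card = d := fun τ hτ => ((hfac τ).1 (hs.subset hτ)).2
  refine ⟨hs.nodup hnd, fun τ => ⟨fun hτ => ⟨⟨τ, hτ, subset_rfl⟩, hcard τ hτ⟩, ?_⟩,
    fun _ hγ => hγ, fun τ hτ hne => ?_⟩
  · rintro ⟨⟨τ', hτ', hττ'⟩, hτd⟩
    rwa [eq_of_subset_of_card_le hττ' (by rw [hτd, hcard τ' hτ'])]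
  · have hset : {γ | γ ⊆ τ ∧ coveredBefore L₀ τ γ} = {γ | γ ⊆ τ ∧ coveredBefore L τ γ} :=
      Set.ext fun γ => and_congr_right (hcov τ hτ γ)
    obtain ⟨τ', hτ'⟩ := List.exists_mem_of_ne_nil _ hne
    rw [hset]
    exact hpure τ (hs.subset hτ)
      (List.ne_nil_of_mem ((mem_prevFacets_of_sublist_iff hs hnd hτ).1 hτ').1)

open scoped Classical in
noncomputable def restrictionSet (L : List (Finset V)) (τ : Finset V) : Finset V :=
  τ.filter fun v => coveredBefore L τ (τ.erase v)

lemma mem_restrictionSet {L : List (Finset V)} {τ : Finset V} {v : V} :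
    v ∈ restrictionSet L τ ↔ v ∈ τ ∧ coveredBefore L τ (τ.erase v) := by
  simp [restrictionSet]

lemma restrictionSet_subset (L : List (Finset V)) (τ : Finset V) : restrictionSet L τ ⊆ τ :=
  fun _ hv => (mem_restrictionSet.1 hv).1

lemma sum_Icc_X_pow_mul_one_sub_X_pow {R τ : Finset V} (h : R ⊆ τ) :
    ∑ γ ∈ Icc R τ, (X : ℤ[X]) ^ γ.card * (1 - X) ^ (τ.card - γ.card) = X ^ R.card := by
  have hinj : Set.InjOn (R ∪ ·) ↑(τ \ R).powerset := fun x hx y hy hxy => by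
    have hx : Disjoint R x := disjoint_of_subset_right (mem_powerset.1 hx) disjoint_sdiff
    have hy : Disjoint R y := disjoint_of_subset_right (mem_powerset.1 hy) disjoint_sdiff
    rw [← union_sdiff_cancel_left hx, ← union_sdiff_cancel_left hy]
    exact congrArg (· \ R) hxy
  calc ∑ γ ∈ Icc R τ, (X : ℤ[X]) ^ γ.card * (1 - X) ^ (τ.card - γ.card)
      = X ^ R.card * ∑ s ∈ (τ \ R).powerset,
          X ^ s.card * (1 - X) ^ ((τ \ R).card - s.card) := by
        rw [Icc_eq_image_powerset h, sum_image hinj, mul_sum]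
        refine sum_congr rfl fun s hs => ?_
        have hs' := mem_powerset.1 hs
        rw [card_union_of_disjoint (disjoint_of_subset_right hs' disjoint_sdiff),
          card_sdiff_of_subset h, Nat.sub_sub, pow_add]
        ring
    _ = X ^ R.card := by rw [sum_pow_mul_eq_add_pow]; simp

namespace IsShelling

variable {K : Set (Finset V)} {d : ℕ} {L : List (Finset V)} {τ : Finset V}

lemma card_eq (hL : IsShelling K d L) (hτ : τ ∈ L) : τ.card = d :=
  ((hL.2.1 τ).1 hτ).2

lemma not_coveredBefore_self (hL : IsShelling K d L) (hτ : τ ∈ L) :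
    ¬ coveredBefore L τ τ := by
  rintro ⟨τ', hτ', hττ'⟩
  have hτ'L := (prevFacets_sublist L τ).subset hτ'
  rw [← eq_of_subset_of_card_le hττ' (by rw [hL.card_eq hτ, hL.card_eq hτ'L])] at hτ'
  exact self_notMem_prevFacets L τ hτ'

/-- By purity, a covered face of `τ` lies in some covered `τ.erase v`. -/
lemma coveredBefore_iff (hL : IsShelling K d L) (hτ : τ ∈ L) {γ : Finset V} (hγ : γ ⊆ τ) :
    coveredBefore L τ γ ↔ ¬ restrictionSet L τ ⊆ γ := by
  constructor
  · intro hc hR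
    obtain ⟨τ₀, hτ₀, -⟩ := id hc
    obtain ⟨-, hpure⟩ := hL.2.2.2 τ hτ (List.ne_nil_of_mem hτ₀)
    obtain ⟨t, ⟨htτ, htc⟩, hγt, htcard⟩ := hpure γ ⟨hγ, hc⟩
    obtain ⟨v, hvτ, hvt⟩ := not_subset.1 fun hτt =>
      hL.not_coveredBefore_self hτ (subset_antisymm htτ hτt ▸ htc)
    have ht : t = τ.erase v := eq_of_subset_of_card_le (subset_erase.2 ⟨htτ, hvt⟩)
      (by rw [card_erase_of_mem hvτ, hL.card_eq hτ, htcard])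
    exact hvt (hγt (hR (mem_restrictionSet.2 ⟨hvτ, ht ▸ htc⟩)))
  · intro hR
    obtain ⟨v, hvR, hvγ⟩ := not_subset.1 hR
    exact coveredBefore_mono (subset_erase.2 ⟨hγ, hvγ⟩) (mem_restrictionSet.1 hvR).2

lemma TL_eq_image_restrictionSet (hL : IsShelling K d L) (hτ : τ ∈ L) :
    TL L τ = (restrictionSet L τ).image τ.erase := by
  ext γ
  simp only [TL, Set.mem_ofPred_eq, coe_image, Set.mem_image, mem_coe]
  constructor
  · rintro ⟨hγ, hc, hmax⟩
    obtain ⟨v, hvR, hvγ⟩ := not_subset.1 ((hL.coveredBefore_iff hτ hγ).1 hc)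
    exact ⟨v, hvR,
      hmax _ (subset_erase.2 ⟨hγ, hvγ⟩) (erase_subset _ _) (mem_restrictionSet.1 hvR).2⟩
  · rintro ⟨v, hvR, rfl⟩
    refine ⟨erase_subset _ _, (mem_restrictionSet.1 hvR).2, fun γ' hγ' hγ'τ hc => ?_⟩
    obtain ⟨w, hwR, hwγ'⟩ := not_subset.1 ((hL.coveredBefore_iff hτ hγ'τ).1 hc)
    have hwv : w = v := by
      by_contra hne
      exact hwγ' (hγ' (mem_erase.2 ⟨hne, (mem_restrictionSet.1 hwR).1⟩))
    exact subset_antisymm (subset_erase.2 ⟨hγ'τ, hwv ▸ hwγ'⟩) hγ'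

lemma ncard_TL (hL : IsShelling K d L) (hτ : τ ∈ L) :
    (TL L τ).ncard = (restrictionSet L τ).card := by
  rw [hL.TL_eq_image_restrictionSet hτ, Set.ncard_coe_finset,
    card_image_of_injOn ((erase_injOn τ).mono (coe_subset.2 (restrictionSet_subset L τ)))]

lemma powerset_sdiff_facesOf_eq_Icc (hL : IsShelling K d L) {P Q : List (Finset V)}
    (hPQ : L = P ++ τ :: Q) : τ.powerset \ facesOf P = Icc (restrictionSet L τ) τ := by
  have hτ : τ ∈ L := by simp [hPQ]
  have hτP : τ ∉ P := by
    have hnd := hL.1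
    rw [hPQ] at hnd
    exact fun h => List.disjoint_of_nodup_append hnd h List.mem_cons_self
  have key : ∀ γ ⊆ τ, (∃ τ' ∈ P, γ ⊆ τ') ↔ ¬ restrictionSet L τ ⊆ γ := fun γ hγ => by
    rw [← hL.coveredBefore_iff hτ hγ, coveredBefore, hPQ, prevFacets_append_cons Q hτP]
  ext γ
  simp only [mem_sdiff, mem_powerset, mem_Icc, mem_facesOf]
  constructor
  · rintro ⟨hγ, hnc⟩
    exact ⟨not_not.1 (mt (key γ hγ).2 hnc), hγ⟩
  · rintro ⟨hR, hγ⟩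
    exact ⟨hγ, fun hc => (key γ hγ).1 hc hR⟩

lemma sum_facesOf_prefix (hL : IsShelling K d L) {P : List (Finset V)} (hP : P <+: L) :
    ∑ γ ∈ facesOf P, (X : ℤ[X]) ^ γ.card * (1 - X) ^ (d - γ.card) =
      (P.map fun τ => X ^ (restrictionSet L τ).card).sum := by
  induction P using List.reverseRecOn with
  | nil => simp [facesOf]
  | append_singleton P τ ih =>
    obtain ⟨Q, hQ⟩ := hP
    have hPQ : L = P ++ τ :: Q := by simpa using hQ.symm
    have hτ : τ ∈ L := by simp [hPQ]
    rw [facesOf_append_singleton, ← union_sdiff_self_eq_union, sum_union disjoint_sdiff,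
      ih ((List.prefix_append P [τ]).trans ⟨Q, hQ⟩), hL.powerset_sdiff_facesOf_eq_Icc hPQ,
      ← hL.card_eq hτ, sum_Icc_X_pow_mul_one_sub_X_pow (restrictionSet_subset L τ)]
    simp

lemma hPolynomial_eq_sum_X_pow_ncard_TL (hL : IsShelling K d L) :
    ∑ i ∈ range (d + 1), C (faceCount {γ | ∃ τ ∈ L, γ ⊆ τ} i : ℤ) * X ^ i * (1 - X) ^ (d - i) =
      ∑ τ ∈ L.toFinset, X ^ (TL L τ).ncard := by
  have hfaces : {γ | ∃ τ ∈ L, γ ⊆ τ} = (facesOf L : Set (Finset V)) := by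
    ext γ
    simp [mem_facesOf]
  have hcard : ∀ γ ∈ facesOf L, γ.card ≤ d := fun γ hγ => by
    obtain ⟨τ, hτ, hγτ⟩ := mem_facesOf.1 hγ
    exact hL.card_eq hτ ▸ card_le_card hγτ
  simp only [hfaces, faceCount_coe, ← nsmul_eq_mul, map_natCast, smul_mul_assoc]
  rw [sum_range_card_filter_nsmul hcard (fun i => (X : ℤ[X]) ^ i * (1 - X) ^ (d - i)),
    hL.sum_facesOf_prefix List.prefix_rfl, List.sum_toFinset _ hL.1]
  exact congrArg List.sum (List.map_congr_left fun τ hτ => by rw [hL.ncard_TL hτ])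

end IsShelling

lemma sum_C_FVec_mul_X_pow {k d : ℕ} {N : Finset (Mono k)} (hN : ∀ μ ∈ N, mDeg μ ≤ d) :
    ∑ i ∈ range (d + 1), C (FVec (N : Set (Mono k)) i : ℤ) * X ^ i = ∑ μ ∈ N, X ^ mDeg μ := by
  simp only [FVec_coe, ← nsmul_eq_mul, map_natCast]
  exact sum_range_card_filter_nsmul hN _

lemma IsMulticomplex.mem_of_rlex_le_of_dvd {k : ℕ} {b : Fin k → ℕ∞} {M : Set (Mono k)}
    (hM : IsMulticomplex b M) (hcomp : ∀ μ ν, mDeg μ = mDeg ν → mRlexLt μ ν → ν ∈ M → μ ∈ M)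
    {ν μ ν' : Mono k} (hν : ν ∈ M) (hμν : mDvd μ ν) (hdeg : mDeg μ = mDeg ν')
    (hle : ν' = μ ∨ mRlexLt ν' μ) : ν' ∈ M := by
  have hμ := hM.2.2 ν hν μ hμν
  rcases hle with rfl | hlt
  · exact hμ
  · exact hcomp ν' μ hdeg.symm hlt hμ

theorem restricted_shelling_general {l m n d : ℕ} (p : Fin m → ℕ)
    (L : List (Finset (LamVert l p)))
    (hL : IsShelling (skel l p d) d L)
    (σ : Finset (LamVert l p) → Mono (n - d))
    (hσ : Set.BijOn σ (skelFacets l p d) (SBoundDeg (lamBounds n d m p) d))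
    (hdeg : ∀ τ ∈ L, mDeg (σ τ) = (TL L τ).ncard)
    (hprop : ∀ τ ∈ L, ∀ γ ∈ TL L τ, ∃ τ' ∈ prevFacets L τ, ∃ μ : Mono (n - d),
        mDvd μ (σ τ) ∧ γ ⊆ τ' ∧ mDeg μ = mDeg (σ τ') ∧ (σ τ' = μ ∨ mRlexLt (σ τ') μ))
    (M : Set (Mono (n - d)))
    (hM : IsMulticomplex (lamBounds n d m p) M)
    (hMd : M ⊆ SBoundDeg (lamBounds n d m p) d)
    (hcomp : ∀ μ ν, mDeg μ = mDeg ν → mRlexLt μ ν → ν ∈ M → μ ∈ M)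
    (LM : List (Finset (LamVert l p)))
    (hsubl : LM.Sublist L) (hmem : ∀ τ, τ ∈ LM ↔ τ ∈ L ∧ σ τ ∈ M) :
    (∀ τ ∈ LM, TL LM τ = TL L τ) ∧
    IsShelling {γ | ∃ τ ∈ LM, γ ⊆ τ} d LM ∧
    IsHVector {γ | ∃ τ ∈ LM, γ ⊆ τ} d (fun i => (FVec M i : ℤ)) := by
  have hcov : ∀ τ ∈ LM, ∀ γ ⊆ τ, coveredBefore LM τ γ ↔ coveredBefore L τ γ := by
    refine fun τ hτ γ hγ => coveredBefore_sublist_iff hsubl hL.1 hτ (fun β hβ => ?_) hγ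
    obtain ⟨hτL, hστ⟩ := (hmem τ).1 hτ
    obtain ⟨τ', hτ', μ, hμ, hβτ', hdegμ, hle⟩ := hprop τ hτL β hβ
    exact ⟨τ', hτ', (hmem τ').2 ⟨(prevFacets_sublist L τ).subset hτ',
      hM.mem_of_rlex_le_of_dvd hcomp hστ hμ hdegμ hle⟩, hβτ'⟩
  have hTL : ∀ τ ∈ LM, TL LM τ = TL L τ := fun τ hτ => TL_congr (hcov τ hτ)
  have hshell := hL.sublist hsubl hcov
  have hM_eq : M = ↑(LM.toFinset.image σ) := by
    ext μ
    simp only [coe_image, List.coe_toFinset]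
    refine ⟨fun hμ => ?_, ?_⟩
    · obtain ⟨τ, hτ, rfl⟩ := hσ.2.2 (hMd hμ)
      exact ⟨τ, (hmem τ).2 ⟨(hL.2.1 τ).2 ⟨⟨hτ.1, hτ.2.le⟩, hτ.2⟩, hμ⟩, rfl⟩
    · rintro ⟨τ, hτ, rfl⟩
      exact ((hmem τ).1 hτ).2
  have hσinj : Set.InjOn σ ↑LM.toFinset := hσ.injOn.mono fun τ hτ => by
    obtain ⟨⟨hΛ, -⟩, hcard⟩ := (hL.2.1 τ).1 (hsubl.subset (List.mem_toFinset.1 hτ))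
    exact ⟨hΛ, hcard⟩
  refine ⟨hTL, hshell, ?_⟩
  rw [IsHVector, hshell.hPolynomial_eq_sum_X_pow_ncard_TL, hM_eq,
    sum_C_FVec_mul_X_pow fun μ hμ => (hMd (hM_eq ▸ hμ)).2, sum_image hσinj]
  refine sum_congr rfl fun τ hτ => ?_
  rw [List.mem_toFinset] at hτ
  rw [hTL τ hτ, hdeg τ (hsubl.subset hτ)]

/-- Given a shelling `L` of `skel_d(Λ)` and a bijection `σ` from its facets
to `S^d` with the stated properties, and a reverse-lex compressed multicomplex `M ⊆ S^d`,
the restriction `L^M` of `L` to `σ⁻¹(M)` satisfies `T_{L^M}(τ) = T_L(τ)` for `τ ∈ σ⁻¹(M)`,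
is a shelling of `∪_{τ ∈ σ⁻¹(M)} τ̄`, and the h-vector of this subcomplex is `F(M)`. -/
theorem restricted_shelling {l m n d : ℕ} (p : Fin m → ℕ)
    (hp : ∀ i, 2 ≤ p i) (hn : n = l + ∑ i, p i) (hd : d ≤ n - m)
    (L : List (Finset (LamVert l p)))
    (hL : IsShelling (skel l p d) d L)
    (σ : Finset (LamVert l p) → Mono (n - d))
    (hσ : Set.BijOn σ (skelFacets l p d) (SBoundDeg (lamBounds n d m p) d))
    (hdeg : ∀ τ ∈ L, mDeg (σ τ) = (TL L τ).ncard)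
    (hprop : ∀ τ ∈ L, ∀ γ ∈ TL L τ, ∃ τ' ∈ prevFacets L τ, ∃ μ : Mono (n - d),
        mDvd μ (σ τ) ∧ γ ⊆ τ' ∧ mDeg μ = mDeg (σ τ') ∧ (σ τ' = μ ∨ mRlexLt (σ τ') μ))
    (M : Set (Mono (n - d)))
    (hM : IsMulticomplex (lamBounds n d m p) M)
    (hMd : M ⊆ SBoundDeg (lamBounds n d m p) d)
    (hcomp : ∀ μ ν, mDeg μ = mDeg ν → mRlexLt μ ν → ν ∈ M → μ ∈ M)
    (LM : List (Finset (LamVert l p)))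
    (hsubl : LM.Sublist L) (hmem : ∀ τ, τ ∈ LM ↔ τ ∈ L ∧ σ τ ∈ M) :
    (∀ τ ∈ LM, TL LM τ = TL L τ) ∧
    IsShelling {γ | ∃ τ ∈ LM, γ ⊆ τ} d LM ∧
    IsHVector {γ | ∃ τ ∈ LM, γ ⊆ τ} d (fun i => (FVec M i : ℤ)) :=
  restricted_shelling_general p L hL σ hσ hdeg hprop M hM hMd hcomp LM hsubl hmem
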